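/- Let A be a ∗-ring with h⁻(A) = 0 and let μ ∈ A be a self-dual element which is not a zero divisor (so the involution descends to the quotient ring A/(μ)). Then h⁻(A/(μ)) = 0 if and only if [μ] is not a zero divisor in h⁺(A). Furthermore, the quotient map A → A/(μ) induces an isomorphism h⁺(A)/([μ]) ≅ h⁺(A/(μ)). -/
import Mathlib


/-- Let `A` be a commutative ∗-ring with `h⁻(A) = 0` and `μ ∈ A` self-dual and not a zero
divisor.  Then:
(1) `h⁻(A/(μ)) = 0` (every element of `A/(μ)` killed by `id + ∗` is in the image of
`id − ∗`) if and only if `[μ]` is not a zero divisor in `h⁺(A)` (i.e. for self-dual `x`,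
if `x·μ` is a trace `t + t∗`, then `x` is a trace);
(2) the quotient map induces an isomorphism `h⁺(A)/([μ]) ≅ h⁺(A/(μ))`, expressed here by:
(surjectivity) every `a ∈ A` that is self-dual mod `(μ)` agrees, modulo `(μ)` and traces,
with a self-dual element `x` of `A`; (injectivity) every self-dual `x ∈ A` that becomes a
trace in `A/(μ)` lies in `([μ]) ⊆ h⁺(A)`, i.e. `x = c·μ + (t + t∗)` with `c` self-dual. -/
theorem stmt_1 {A : Type*} [CommRing A] [StarRing A]
    (hA : ∀ a : A, star a = -a → ∃ b : A, a = b - star b)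
    (μ : A) (hμ : star μ = μ) (hreg : ∀ x : A, μ * x = 0 → x = 0) :
    ((∀ a : A, star a + a ∈ Ideal.span {μ} →
        ∃ b : A, a - (b - star b) ∈ Ideal.span ({μ} : Set A)) ↔
      (∀ x : A, star x = x → (∃ t : A, x * μ = t + star t) → ∃ t : A, x = t + star t)) ∧
    (∀ a : A, star a - a ∈ Ideal.span {μ} →
      ∃ x : A, star x = x ∧ ∃ b : A, a - x - (b + star b) ∈ Ideal.span ({μ} : Set A)) ∧
    (∀ x : A, star x = x → (∃ b : A, x - (b + star b) ∈ Ideal.span ({μ} : Set A)) →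
      ∃ c t : A, star c = c ∧ x = c * μ + (t + star t)) := by
  have starμ : ∀ c : A, star (μ * c) = μ * star c := fun c => by
    rw [star_mul, hμ, mul_comm]
  refine ⟨⟨?_, ?_⟩, ?_, ?_⟩
  · -- h⁻(A/μ) = 0 → [μ] regular
    intro h x hx ⟨t, ht⟩
    have hmem : star t + t ∈ Ideal.span ({μ} : Set A) := by
      rw [Ideal.mem_span_singleton]
      exact ⟨x, by rw [add_comm, ← ht, mul_comm]⟩
    obtain ⟨b, hb⟩ := h t hmem
    rw [Ideal.mem_span_singleton] at hb
    obtain ⟨c, hc⟩ := hb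
    have hc' : star t - (star b - b) = μ * star c := by
      have := congrArg star hc
      simpa [starμ, star_sub] using this
    have key : μ * (c + star c) = μ * x := by
      have : (t - (b - star b)) + (star t - (star b - b)) = μ * c + μ * star c := by
        rw [hc, hc']
      calc μ * (c + star c) = μ * c + μ * star c := by ring
        _ = (t - (b - star b)) + (star t - (star b - b)) := this.symm
        _ = t + star t := by ring
        _ = μ * x := by rw [← ht, mul_comm]
    have : x = c + star c := by
      have h0 : μ * (x - (c + star c)) = 0 := by rw [mul_sub, key]; ring
      have := hreg _ h0
      linear_combination this
    exact ⟨c, this⟩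
  · -- [μ] regular → h⁻(A/μ) = 0
    intro h a ha
    rw [Ideal.mem_span_singleton] at ha
    obtain ⟨x, hx⟩ := ha
    have hsx : star x = x := by
      have h1 : a + star a = μ * star x := by
        have := congrArg star hx
        simpa [starμ, star_add] using this
      have h0 : μ * (star x - x) = 0 := by
        rw [mul_sub, ← h1, ← hx]; ring
      have := hreg _ h0
      linear_combination this
    obtain ⟨t, ht⟩ := h x hsx ⟨a, by rw [mul_comm, ← hx]; ring⟩
    have ha' : star (a - μ * t) = -(a - μ * t) := by
      rw [star_sub, starμ]
      have : star a + a = μ * (t + star t) := by rw [hx, ht]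
      linear_combination this
    obtain ⟨b, hb⟩ := hA _ ha'
    refine ⟨b, ?_⟩
    rw [Ideal.mem_span_singleton]
    exact ⟨t, by linear_combination hb⟩
  · -- surjectivity
    intro a ha
    rw [Ideal.mem_span_singleton] at ha
    obtain ⟨c, hc⟩ := ha
    have hc' : star c = -c := by
      have h1 : a - star a = μ * star c := by
        have := congrArg star hc
        simpa [starμ, star_sub] using this
      have h0 : μ * (star c + c) = 0 := by
        rw [mul_add, ← h1, ← hc]; ring
      have := hreg _ h0
      linear_combination this
    obtain ⟨b, hb⟩ := hA _ hc'
    refine ⟨a + μ * b, ?_, 0, ?_⟩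
    · rw [star_add, starμ]
      have : star a = a + μ * (b - star b) := by rw [← hb, ← hc]; ring
      linear_combination this
    · rw [Ideal.mem_span_singleton]
      exact ⟨-b, by rw [star_zero]; ring⟩
  · -- injectivity
    intro x hx ⟨b, hb⟩
    rw [Ideal.mem_span_singleton] at hb
    obtain ⟨d, hd⟩ := hb
    have hsd : star d = d := by
      have h1 : x - (star b + b) = μ * star d := by
        have := congrArg star hd
        simpa [starμ, star_sub, star_add, hx] using this
      have h0 : μ * (star d - d) = 0 := by
        rw [mul_sub, ← h1, ← hd]; ring
      have := hreg _ h0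
      linear_combination this
    exact ⟨d, b, hsd, by linear_combination hd + (d * hμ - hμ * d)⟩
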